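/- arXiv:0710.5874 — 2 statements merged into one kernel-verified Lean document; each statement's English description precedes it below -/
import Mathlib

section
/- Special right decomposition for δ-separation: for any directed graph G = (V,E) and any subsets A, B, C ⊆ V and D ⊆ B, if C δ-separates A from B in G (A ir_δ B | C), then (C ∪ B) \ D δ-separates A from D in G (A ir_δ D | (C ∪ B) \ D). -/
open Set

variable {V : Type*}

/-- There is a directed path (a sequence of ≥ 2 distinct vertices joined by
directed edges) from `v` to `w`; i.e. `v` is an ancestor of `w`. -/
def DirPathConn (E : V → V → Prop) (v w : V) : Prop :=
  ∃ l : List V, l.Chain' E ∧ l.Nodup ∧ 2 ≤ l.length ∧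
    l.head? = some v ∧ l.getLast? = some w

/-- `an(A)`: vertices outside `A` that are ancestors of some element of `A`. -/
def anSet (E : V → V → Prop) (A : Set V) : Set V :=
  {v | v ∉ A ∧ ∃ a ∈ A, DirPathConn E v a}

/-- `An(A) = A ∪ an(A)`, the smallest ancestral set containing `A`. -/
def AnSet (E : V → V → Prop) (A : Set V) : Set V := A ∪ anSet E A

/-- `pa(A)`: parents of `A` outside of `A`. -/
def paSet (E : V → V → Prop) (A : Set V) : Set V :=
  {v | v ∉ A ∧ ∃ a ∈ A, E v a}

/-- `cl(A) = A ∪ pa(A)`, the closure of `A`. -/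
def clSet (E : V → V → Prop) (A : Set V) : Set V := A ∪ paSet E A

/-- The induced subgraph `G_A` (as an edge relation on `V` supported on `A`). -/
def inducedGraph (E : V → V → Prop) (A : Set V) : V → V → Prop :=
  fun j k => E j k ∧ j ∈ A ∧ k ∈ A

/-- `G^B`: delete from `G` every directed edge starting in `B`. -/
def delOut (E : V → V → Prop) (B : Set V) : V → V → Prop :=
  fun j k => E j k ∧ j ∉ B

/-- The moral graph `G^m`: distinct `j, k` are adjacent iff they are joined by
an edge in some direction or have a common child. -/
def moralGraph (E : V → V → Prop) : V → V → Prop :=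
  fun j k => j ≠ k ∧ (E j k ∨ E k j ∨ ∃ c, E j c ∧ E k c)

/-- `l` is an undirected path from `v` to `w` in the undirected graph `H`:
a sequence of ≥ 2 distinct vertices, consecutive ones adjacent. -/
def IsUPath (H : V → V → Prop) (l : List V) (v w : V) : Prop :=
  l.Chain' H ∧ l.Nodup ∧ 2 ≤ l.length ∧
    l.head? = some v ∧ l.getLast? = some w

/-- `A ⊥_g B | C` in the undirected graph `H`: every path from a vertex of `A`
to a vertex of `B` contains a vertex of `C`. -/
def uSep (H : V → V → Prop) (A B C : Set V) : Prop :=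
  ∀ v ∈ A, ∀ w ∈ B, ∀ l : List V, IsUPath H l v w → ∃ c ∈ C, c ∈ l

/-- δ-separation for pairwise disjoint `A, B, C`: `A ⊥_g B | C` in the moral
graph of the subgraph of `G^B` induced by `An(A ∪ B ∪ C)`. -/
def deltaSepDisjoint (E : V → V → Prop) (A B C : Set V) : Prop :=
  uSep (moralGraph (inducedGraph (delOut E B) (AnSet E (A ∪ B ∪ C)))) A B C

/-- δ-separation `A ir_δ B | C` for general (not necessarily disjoint) sets:
`C \ B` δ-separates `A \ (B ∪ C)` from `B`. -/
def deltaSep (E : V → V → Prop) (A B C : Set V) : Prop :=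
  deltaSepDisjoint E (A \ (B ∪ C)) B (C \ B)

/-! Both δ-separations are read in moral graphs on the same ancestral set `An(A ∪ B ∪ C)`.
Cut a path from `A` to `D` that avoids `(C ∪ B) \ D` at its first vertex in `B`: every edge
before the cut starts outside `B`, so the truncated path survives in the moral graph of `G^B`
and runs from `A` to `B`; by hypothesis it meets `C \ B`, which lies in `(C ∪ B) \ D`. -/

theorem List.exists_eq_append_cons_of_exists_mem {α : Type*} {p : α → Prop} {l : List α}
    (h : ∃ x ∈ l, p x) : ∃ as x bs, l = as ++ x :: bs ∧ p x ∧ ∀ a ∈ as, ¬p a := by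
  classical
  obtain ⟨x, hx⟩ := Option.isSome_iff_exists.mp (List.find?_isSome (p := (p ·)).mpr (by simpa))
  obtain ⟨hpx, as, bs, rfl, has⟩ := List.find?_eq_some_iff_append.mp hx
  exact ⟨as, x, bs, rfl, by simpa using hpx, fun a ha => by simpa using has a ha⟩

theorem List.IsChain.imp_of_mem_dropLast_imp {α : Type*} {R S : α → α → Prop} {l : List α}
    (H : ∀ a b : α, a ∈ l.dropLast → b ∈ l → R a b → S a b) (p : IsChain R l) :
    IsChain S l := by
  induction p with
  | nil => exact .nil
  | singleton => exact .singleton _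
  | cons_cons hab _ ih =>
    exact .cons_cons (H _ _ (by simp) (by simp) hab)
      (ih fun a b ha hb => H a b (by simp_all) (by simp_all))

theorem uSep.mono {H : V → V → Prop} {A A' B B' C C' : Set V} (h : uSep H A B C)
    (hA : A' ⊆ A) (hB : B' ⊆ B) (hC : C ⊆ C') : uSep H A' B' C' := by
  intro v hv w hw l hl
  obtain ⟨c, hc, hcl⟩ := h v (hA hv) w (hB hw) l hl
  exact ⟨c, hC hc, hcl⟩

theorem uSep.union_diff_of_subset {H H' : V → V → Prop} {A B C D : Set V}
    (h : uSep H A B C) (hAB : Disjoint A B) (hDB : D ⊆ B)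
    (hH : ∀ x y, H' x y → x ∉ B → y ∉ B \ D → H x y) : uSep H' A D (C ∪ B \ D) := by
  intro v hv w hw l hl
  by_contra! hl_avoid
  obtain ⟨hchain, hnodup, -, hhead, hlast⟩ := hl
  have hwl : w ∈ l := List.mem_of_getLast? hlast
  obtain ⟨as, x, bs, rfl, hxB, has⟩ :=
    List.exists_eq_append_cons_of_exists_mem ⟨w, hwl, hDB hw⟩
  have hl_notMem : ∀ y ∈ as ++ x :: bs, y ∉ B \ D := fun y hy hyB => hl_avoid y (.inr hyB) hy
  rcases as with _ | ⟨a, as⟩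
  · simp only [List.nil_append, List.head?_cons, Option.some.injEq] at hhead
    exact hAB.notMem_of_mem_left hv (hhead ▸ hxB)
  have hprefix : a :: as ++ [x] <+: a :: as ++ x :: bs := ⟨bs, by simp⟩
  have hpath : IsUPath H (a :: as ++ [x]) v x := by
    refine ⟨(hchain.prefix hprefix).imp_of_mem_dropLast_imp fun y z hy hz => ?_,
      hnodup.sublist hprefix.sublist, by simp, by simpa using hhead,
      List.getLast?_concat⟩
    rw [List.dropLast_concat] at hy
    exact fun hyz => hH y z hyz (has y hy) (hl_notMem z (hprefix.subset hz))
  obtain ⟨c, hcC, hc⟩ := h v hv x hxB _ hpath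
  exact hl_avoid c (.inl hcC) (by simp at hc ⊢; tauto)

theorem moralGraph_delOut_of_notMem {E : V → V → Prop} {S B D : Set V} {x y : V}
    (hxy : moralGraph (inducedGraph (delOut E D) S) x y) (hx : x ∉ B) (hy : y ∉ B \ D) :
    moralGraph (inducedGraph (delOut E B) S) x y := by
  obtain ⟨hne, ⟨⟨hxy, -⟩, hxS, hyS⟩ | ⟨⟨hyx, hyD⟩, hyS, hxS⟩ |
    ⟨c, ⟨⟨hxc, -⟩, hxS, hcS⟩, ⟨⟨hyc, hyD⟩, hyS, -⟩⟩⟩ := hxy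
  · exact ⟨hne, .inl ⟨⟨hxy, hx⟩, hxS, hyS⟩⟩
  · exact ⟨hne, .inr (.inl ⟨⟨hyx, fun hyB => hy ⟨hyB, hyD⟩⟩, hyS, hxS⟩)⟩
  · exact ⟨hne, .inr (.inr ⟨c, ⟨⟨hxc, hx⟩, hxS, hcS⟩, ⟨⟨hyc, fun hyB => hy ⟨hyB, hyD⟩⟩, hyS, hcS⟩⟩)⟩

theorem diff_union_union_diff_eq (A B C : Set V) : A \ (B ∪ C) ∪ B ∪ C \ B = A ∪ B ∪ C := by
  ext x; simp only [mem_union, mem_sdiff]; tauto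

theorem deltaSep_iff {E : V → V → Prop} {A B C : Set V} :
    deltaSep E A B C ↔ uSep (moralGraph (inducedGraph (delOut E B) (AnSet E (A ∪ B ∪ C))))
      (A \ (B ∪ C)) B (C \ B) := by
  rw [deltaSep, deltaSepDisjoint, diff_union_union_diff_eq]

theorem deltaSep_special_right_decomposition_general (E : V → V → Prop)
    (A B C D : Set V) (hDB : D ⊆ B)
    (h : deltaSep E A B C) : deltaSep E A D ((C ∪ B) \ D) := by
  rw [deltaSep_iff] at h ⊢
  have hU : A ∪ D ∪ (C ∪ B) \ D = A ∪ B ∪ C := by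
    ext x; have := @hDB x; simp only [mem_union, mem_sdiff]; tauto
  rw [hU]
  refine (h.union_diff_of_subset (disjoint_sdiff_left.mono_right subset_union_left) hDB
    fun x y hxy hx hy => moralGraph_delOut_of_notMem hxy hx hy).mono ?_ subset_rfl ?_
  all_goals intro x; have := @hDB x; simp only [mem_union, mem_sdiff]; tauto

/-- Special right decomposition for δ-separation. -/
theorem deltaSep_special_right_decomposition [Fintype V] (E : V → V → Prop)
    (hE : ∀ j k, E j k → j ≠ k) (A B C D : Set V) (hDB : D ⊆ B)
    (h : deltaSep E A B C) : deltaSep E A D ((C ∪ B) \ D) :=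
  deltaSep_special_right_decomposition_general E A B C D hDB h
end

section
/- Conditional right decomposition for δ-separation: let G = (V,E) be a directed graph, A, B, C ⊆ V and D ⊆ B with (B ∩ A) \ (C ∪ D) = ∅. If (i) C δ-separates A from B in G (A ir_δ B | C), (ii) C ∪ D δ-separates B from A \ (C ∪ D) in G (B ir_δ A \ (C ∪ D) | C ∪ D), and (iii) for every k ∈ C \ D, either C ∪ B δ-separates A from {k} in G (A ir_δ {k} | C ∪ B) or C ∪ D ∪ A δ-separates B from {k} in G (B ir_δ {k} | C ∪ D ∪ A), then C δ-separates A from D in G (A ir_δ D | C). -/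
/-! Suppose a path in the moral graph of `G^D` on `An(A ∪ C ∪ D)` leads from `A \ (C ∪ D)` to `D`
avoiding `C \ D`. It contains a segment from some `a ∈ A \ (C ∪ D)` to a vertex `y ∈ B` whose
interior avoids `A ∪ B ∪ C ∪ D`. If `y ∈ D`, the segment survives in `G^B` and contradicts (i).
Otherwise `y ∉ A ∪ C ∪ D`; let `a - v` be its first edge. If `v → a`, the reversed segment
contradicts (ii). Otherwise `a` has a child `u` (`v` itself or a common child of `a` and `v`), and a
directed path from `u` to its first vertex `k` of `A ∪ B ∪ C` yields moral walks `a → u ⇝ k` and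
`y ⇝ v - u ⇝ k` that contradict (i) if `k ∈ B`, (iii) if `k ∈ C \ B`, and (ii) if `k ∈ A \ (B ∪ C)`.
-/

open Set

variable {V : Type*}

open Relation

namespace Relation.ReflTransGen

variable {α : Type*} {r s : α → α → Prop} {a b : α}

theorem exists_nodup_isChain (h : ReflTransGen r a b) :
    ∃ l : List α, l.IsChain r ∧ l.Nodup ∧ l.head? = some a ∧ l.getLast? = some b := by
  induction h using head_induction_on with
  | refl => exact ⟨[b], by simp, by simp, rfl, rfl⟩
  | @head a c hac _ ih =>
    obtain ⟨l, hl, hnd, hh, hlast⟩ := ih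
    by_cases ha : a ∈ l
    · obtain ⟨s, t, rfl⟩ := List.append_of_mem ha
      exact ⟨a :: t, hl.suffix ⟨s, rfl⟩, hnd.sublist (List.sublist_append_right s _), rfl,
        by rwa [List.getLast?_append_cons] at hlast⟩
    · obtain ⟨t, rfl⟩ : ∃ t, l = c :: t := by
        cases l with
        | nil => simp at hh
        | cons c' t => exact ⟨t, by simpa using hh⟩
      exact ⟨a :: c :: t, hl.cons_cons hac, List.nodup_cons.mpr ⟨ha, hnd⟩, rfl,
        by rwa [List.getLast?_cons_cons]⟩

theorem mono_on {P : α → Prop} (hrs : ∀ ⦃x y⦄, r x y → P x → P y → s x y)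
    (h : ReflTransGen (fun x y => r x y ∧ P y) a b) (ha : P a) : ReflTransGen s a b ∧ P b := by
  induction h with
  | refl => exact ⟨refl, ha⟩
  | tail _ hbc ih => exact ⟨ih.1.tail (hrs hbc.1 ih.2 hbc.2), hbc.2⟩

theorem exists_first_mem {P : Set α} (h : ReflTransGen r a b) (hb : b ∈ P) :
    ∃ c ∈ P, ReflTransGen (fun x y => r x y ∧ x ∉ P) a c := by
  induction h using head_induction_on with
  | refl => exact ⟨b, hb, refl⟩
  | @head a c hac _ ih =>
    by_cases ha : a ∈ P
    · exact ⟨a, ha, refl⟩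
    · obtain ⟨k, hk, hck⟩ := ih
      exact ⟨k, hk, hck.head ⟨hac, ha⟩⟩

theorem exists_segment {P Q : Set α} (h : ReflTransGen r a b) (ha : a ∈ P) (hb : b ∈ Q)
    (hPQ : Disjoint P Q) :
    ∃ p ∈ P, ∃ x, ∃ q ∈ Q, ReflTransGen (fun x y => r x y ∧ y ∉ P ∪ Q) p x ∧ r x q := by
  suffices ∀ c, ReflTransGen r a c →
      (∃ p ∈ P, ReflTransGen (fun x y => r x y ∧ y ∉ P ∪ Q) p c) ∨
      ∃ p ∈ P, ∃ x, ∃ q ∈ Q, ReflTransGen (fun x y => r x y ∧ y ∉ P ∪ Q) p x ∧ r x q by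
    refine (this b h).resolve_left ?_
    rintro ⟨p, hp, hpb⟩
    rcases hpb.cases_tail with rfl | ⟨x, -, -, hb'⟩
    · exact hPQ.notMem_of_mem_left hp hb
    · exact hb' (Or.inr hb)
  intro c hac
  induction hac with
  | refl => exact Or.inl ⟨a, ha, refl⟩
  | @tail c d _ hcd ih =>
    refine ih.elim (fun ⟨p, hp, hpc⟩ => ?_) Or.inr
    by_cases hdP : d ∈ P
    · exact Or.inl ⟨d, hdP, refl⟩
    by_cases hdQ : d ∈ Q
    · exact Or.inr ⟨p, hp, c, d, hdQ, hpc, hcd⟩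
    exact Or.inl ⟨p, hp, hpc.tail ⟨hcd, by simp [hdP, hdQ]⟩⟩

end Relation.ReflTransGen

section Paths

variable {r : V → V → Prop} {l : List V} {v w : V}

theorem reflTransGen_of_isChain (hl : l.IsChain r) (hh : l.head? = some v)
    (hlast : l.getLast? = some w) : ReflTransGen r v w := by
  obtain ⟨t, rfl⟩ := List.head?_eq_some_iff.mp hh
  exact List.relationReflTransGen_of_exists_isChain_cons t hl
    (Option.some_injective _ (List.getLast?_eq_some_getLast _ ▸ hlast))

theorem exists_isUPath_of_reflTransGen (h : ReflTransGen r v w) (hvw : v ≠ w) :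
    ∃ l, IsUPath r l v w := by
  obtain ⟨l, hl, hnd, hh, hlast⟩ := h.exists_nodup_isChain
  refine ⟨l, hl, hnd, ?_, hh, hlast⟩
  match l with
  | [] => simp at hh
  | [_] => simp_all
  | _ :: _ :: _ => simp

end Paths

section Ancestors

variable {E : V → V → Prop} {X Y : Set V} {x y : V}

theorem mem_AnSet_iff : x ∈ AnSet E X ↔ ∃ a ∈ X, ReflTransGen E x a := by
  constructor
  · rintro (hx | ⟨-, a, ha, l, hl, -, -, hh, hlast⟩)
    · exact ⟨x, hx, .refl⟩
    · exact ⟨a, ha, reflTransGen_of_isChain hl hh hlast⟩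
  · rintro ⟨a, ha, hxa⟩
    by_cases hx : x ∈ X
    · exact Or.inl hx
    · exact Or.inr ⟨hx, a, ha,
        exists_isUPath_of_reflTransGen hxa (ne_of_mem_of_not_mem ha hx).symm⟩

theorem AnSet_mono (h : X ⊆ Y) : AnSet E X ⊆ AnSet E Y := fun _ hx =>
  let ⟨a, ha, hxa⟩ := mem_AnSet_iff.mp hx
  mem_AnSet_iff.mpr ⟨a, h ha, hxa⟩

theorem mem_AnSet_of_reflTransGen (h : ReflTransGen E x y) (hy : y ∈ AnSet E X) :
    x ∈ AnSet E X :=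
  let ⟨a, ha, hya⟩ := mem_AnSet_iff.mp hy
  mem_AnSet_iff.mpr ⟨a, ha, h.trans hya⟩

theorem exists_reflTransGen_of_mem_AnSet (hx : x ∈ AnSet E X) :
    ∃ k ∈ X, ReflTransGen (fun p q => E p q ∧ p ∉ X) x k :=
  let ⟨_, ha, hxa⟩ := mem_AnSet_iff.mp hx
  hxa.exists_first_mem ha

end Ancestors

abbrev deltaGraph (E : V → V → Prop) (Z T : Set V) : V → V → Prop :=
  moralGraph (inducedGraph (delOut E Z) T)

abbrev avoiding (H : V → V → Prop) (W : Set V) : V → V → Prop :=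
  fun x y => H x y ∧ x ∉ W ∧ y ∉ W

abbrev deltaReach (E : V → V → Prop) (Z T W : Set V) : V → V → Prop :=
  ReflTransGen (avoiding (deltaGraph E Z T) W)

section DeltaGraph

variable {E : V → V → Prop} {X Z Z₁ Z₂ S T W W₁ W₂ : Set V} {x y : V}

theorem moralGraph_symm {R : V → V → Prop} (h : moralGraph R x y) : moralGraph R y x := by
  obtain ⟨hne, h⟩ := h
  exact ⟨hne.symm, by tauto⟩

theorem deltaReach.symm (h : deltaReach E Z T W x y) : deltaReach E Z T W y x :=
  haveI : Std.Symm (avoiding (deltaGraph E Z T) W) :=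
    ⟨fun _ _ h => ⟨moralGraph_symm h.1, h.2.2, h.2.1⟩⟩
  Std.Symm.symm _ _ h

theorem deltaGraph.transfer (hST : S ⊆ T) (hx : x ∈ Z₂ → x ∈ Z₁) (hy : y ∈ Z₂ → y ∈ Z₁)
    (h : deltaGraph E Z₁ S x y) : deltaGraph E Z₂ T x y := by
  obtain ⟨hne, ⟨⟨hxy, hxZ⟩, hxS, hyS⟩ | ⟨⟨hyx, hyZ⟩, hyS, hxS⟩ |
    ⟨c, ⟨⟨hxc, hxZ⟩, hxS, hcS⟩, ⟨⟨hyc, hyZ⟩, hyS, -⟩⟩⟩ := h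
  · exact ⟨hne, Or.inl ⟨⟨hxy, mt hx hxZ⟩, hST hxS, hST hyS⟩⟩
  · exact ⟨hne, Or.inr <| Or.inl ⟨⟨hyx, mt hy hyZ⟩, hST hyS, hST hxS⟩⟩
  · exact ⟨hne, Or.inr <| Or.inr
      ⟨c, ⟨⟨hxc, mt hx hxZ⟩, hST hxS, hST hcS⟩, ⟨⟨hyc, mt hy hyZ⟩, hST hyS, hST hcS⟩⟩⟩

theorem avoiding_deltaGraph_of_notMem (hST : S ⊆ T) (hZ : Z₂ ⊆ W₁) (hW : W₂ ⊆ W₁) ⦃x y : V⦄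
    (h : deltaGraph E Z₁ S x y) (hx : x ∉ W₁) (hy : y ∉ W₁) :
    avoiding (deltaGraph E Z₂ T) W₂ x y :=
  ⟨h.transfer hST (fun h => absurd (hZ h) hx) (fun h => absurd (hZ h) hy), mt (@hW x) hx,
    mt (@hW y) hy⟩

theorem deltaReach_of_edge (hxy : E x y) (hxZ : x ∉ Z) (hx : x ∈ T) (hy : y ∈ T) (hxW : x ∉ W)
    (hyW : y ∉ W) : deltaReach E Z T W x y := by
  rcases eq_or_ne x y with rfl | hne
  · exact .refl
  · exact .single ⟨⟨hne, Or.inl ⟨⟨hxy, hxZ⟩, hx, hy⟩⟩, hxW, hyW⟩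

theorem deltaReach_of_reflTransGen (h : ReflTransGen (fun p q => E p q ∧ p ∉ Z ∧ p ∉ W) x y)
    (hy : y ∈ AnSet E X) (hyW : y ∉ W) : deltaReach E Z (AnSet E X) W x y := by
  have hmem : ∀ {p}, ReflTransGen (fun p q => E p q ∧ p ∉ Z ∧ p ∉ W) p y → p ∈ AnSet E X :=
    fun hp => mem_AnSet_of_reflTransGen (ReflTransGen.mono (fun _ _ h => h.1) _ _ hp) hy
  refine (h.head_induction_on (motive := fun p _ => p ∉ W ∧ deltaReach E Z (AnSet E X) W p y)
    ⟨hyW, .refl⟩ ?_).2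
  rintro p q ⟨hpq, hpZ, hpW⟩ hqy ⟨hqW, ih⟩
  exact ⟨hpW, (deltaReach_of_edge hpq hpZ (hmem (hqy.head ⟨hpq, hpZ, hpW⟩)) (hmem hqy) hpW
    hqW).trans ih⟩

theorem Relation.ReflTransGen.deltaReach_of_parent {u k p : V}
    (h : ReflTransGen (fun p q => E p q ∧ p ∉ X) u k) (hk : k ∈ X) (hZ : Z ⊆ X) (hW : W ⊆ X)
    (hkW : k ∉ W) (hpu : p = u ∨ E p u) (hpZ : p ∉ Z) (hpW : p ∉ W) :
    deltaReach E Z (AnSet E X) W p k := by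
  have huk : ReflTransGen (fun p q => E p q ∧ p ∉ Z ∧ p ∉ W) u k :=
    ReflTransGen.mono (fun p _ h => ⟨h.1, mt (@hZ p) h.2, mt (@hW p) h.2⟩) _ _ h
  refine deltaReach_of_reflTransGen ?_ (Or.inl hk) hkW
  rcases hpu with rfl | hpu
  exacts [huk, huk.head ⟨hpu, hpZ, hpW⟩]

theorem deltaReach.transfer (h : deltaReach E Z₁ S W₁ x y) (hST : S ⊆ T) (hZ : Z₂ ⊆ W₁)
    (hW : W₂ ⊆ W₁) :
    deltaReach E Z₂ T W₂ x y :=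
  ReflTransGen.mono (fun _ _ h => avoiding_deltaGraph_of_notMem hST hZ hW h.1 h.2.1 h.2.2) _ _ h

end DeltaGraph

section DeltaSep

variable {E : V → V → Prop} {X Y Z U : Set V}

theorem sdiff_union_union_sdiff (X Y Z : Set V) : X \ (Y ∪ Z) ∪ Y ∪ Z \ Y = X ∪ Y ∪ Z := by
  ext
  simp only [Set.mem_union, Set.mem_sdiff]
  tauto

theorem deltaSep.not_deltaReach (h : deltaSep E X Y Z) (hU : U ⊆ X ∪ Y ∪ Z) {x y : V}
    (hx : x ∈ X) (hxY : x ∉ Y) (hxZ : x ∉ Z) (hy : y ∈ Y) :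
    ¬ deltaReach E Y (AnSet E U) (Z \ Y) x y := by
  intro hxy
  obtain ⟨l, hl, hnd, hlen, hh, hlast⟩ :=
    exists_isUPath_of_reflTransGen hxy (ne_of_mem_of_not_mem hy hxY).symm
  have hUT : AnSet E U ⊆ AnSet E (X \ (Y ∪ Z) ∪ Y ∪ Z \ Y) :=
    sdiff_union_union_sdiff X Y Z ▸ AnSet_mono hU
  obtain ⟨c, hc, hcl⟩ := h x ⟨hx, by simp [hxY, hxZ]⟩ y hy l
    ⟨hl.imp fun _ _ h => h.1.transfer hUT id id, hnd, hlen, hh, hlast⟩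
  obtain ⟨t, rfl⟩ := List.head?_eq_some_iff.mp hh
  refine List.IsChain.induction (· ∉ Z \ Y) _ hl (fun _ _ h _ => h.2.2) (fun _ => ?_) c hcl hc
  simp [hxZ]

theorem deltaSep_of_forall_not_deltaReach
    (h : ∀ x ∈ X, x ∉ Y → x ∉ Z → ∀ y ∈ Y, ¬ deltaReach E Y (AnSet E (X ∪ Y ∪ Z)) (Z \ Y) x y) :
    deltaSep E X Y Z := by
  rintro x ⟨hx, hxYZ⟩ y hy l ⟨hl, -, -, hh, hlast⟩
  by_contra hlW
  rw [sdiff_union_union_sdiff] at hl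
  refine h x hx (fun h => hxYZ (Or.inl h)) (fun h => hxYZ (Or.inr h)) y hy
    (reflTransGen_of_isChain ?_ hh hlast)
  exact List.IsChain.imp_of_mem_imp (fun p q hp hq hpq => ⟨hpq, fun h => hlW ⟨p, h, hp⟩,
    fun h => hlW ⟨q, h, hq⟩⟩) hl

end DeltaSep

section Decomposition

variable {E : V → V → Prop} {A B C D : Set V} {a b : V}

theorem false_of_walk_into_D (hDB : D ⊆ B) (h1 : deltaSep E A B C) {x d : V} (ha : a ∈ A)
    (haBC : a ∉ B ∪ C)
    (hax : ReflTransGen (fun p q => deltaGraph E D (AnSet E (A ∪ D ∪ C)) p q ∧ q ∉ B ∪ C) a x)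
    (hxd : deltaGraph E D (AnSet E (A ∪ D ∪ C)) x d) (hd : d ∈ D) : False := by
  have hST : AnSet E (A ∪ D ∪ C) ⊆ AnSet E (A ∪ B ∪ C) := AnSet_mono (by grind)
  obtain ⟨hax, hxBC⟩ := hax.mono_on
    (avoiding_deltaGraph_of_notMem (Z₂ := B) (W₂ := C \ B) hST subset_union_left
      (sdiff_subset.trans subset_union_right)) haBC
  refine h1.not_deltaReach subset_rfl ha (haBC <| .inl ·) (haBC <| .inr ·) (hDB hd)
    (hax.tail ⟨hxd.transfer hST (absurd · (hxBC <| .inl ·)) (fun _ => hd), ?_, ?_⟩)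
  · exact fun h => hxBC (.inr h.1)
  · exact fun h => h.2 (hDB hd)

theorem false_of_common_child (hDB : D ⊆ B) (h1 : deltaSep E A B C)
    (h2 : deltaSep E B (A \ (C ∪ D)) (C ∪ D))
    (h3 : ∀ k ∈ C \ D, deltaSep E A {k} (C ∪ B) ∨ deltaSep E B {k} (C ∪ D ∪ A)) {u v : V}
    (ha : a ∈ A) (haBC : a ∉ B ∪ C) (hb : b ∈ B) (hbACD : b ∉ A ∪ C ∪ D) (hv : v ∉ A ∪ C ∪ D)
    (hbv : deltaReach E D (AnSet E (A ∪ D ∪ C)) (A ∪ C ∪ D) b v)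
    (hau : E a u) (hvu : v = u ∨ E v u) (hu : u ∈ AnSet E (A ∪ D ∪ C)) : False := by
  have hST : AnSet E (A ∪ D ∪ C) ⊆ AnSet E (A ∪ B ∪ C) := AnSet_mono (by grind)
  obtain ⟨k, hk, huk⟩ := exists_reflTransGen_of_mem_AnSet (hST hu)
  by_cases hkB : k ∈ B
  · exact h1.not_deltaReach subset_rfl ha (by grind) (by grind) hkB
      (huk.deltaReach_of_parent hk (by grind) (by grind) (by grind) (.inr hau) (by grind)
        (by grind))
  by_cases hkC : k ∈ C
  · rcases h3 k ⟨hkC, mt (@hDB k) hkB⟩ with h3 | h3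
    · exact h3.not_deltaReach (by grind) ha (by grind) (by grind) rfl
        (huk.deltaReach_of_parent hk (by grind) (by grind) (by grind) (.inr hau) (by grind)
          (by grind))
    · exact h3.not_deltaReach (by grind) hb (by grind) (by grind) rfl
        ((hbv.transfer hST (by grind) (by grind)).trans
          (huk.deltaReach_of_parent hk (by grind) (by grind) (by grind) hvu (by grind) (by grind)))
  · exact h2.not_deltaReach (by grind) hb (by grind) (by grind) (by grind)
      ((hbv.transfer hST (by grind) (by grind)).trans
        (huk.deltaReach_of_parent hk (by grind) (by grind) (by grind) hvu (by grind) (by grind)))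

theorem false_of_walk_into_B (hDB : D ⊆ B) (h1 : deltaSep E A B C)
    (h2 : deltaSep E B (A \ (C ∪ D)) (C ∪ D))
    (h3 : ∀ k ∈ C \ D, deltaSep E A {k} (C ∪ B) ∨ deltaSep E B {k} (C ∪ D ∪ A))
    (ha : a ∈ A) (haB : a ∉ B) (haCD : a ∉ C ∪ D) (hb : b ∈ B)
    (hab : TransGen (fun p q => deltaGraph E D (AnSet E (A ∪ D ∪ C)) p q ∧ q ∉ A ∪ C ∪ D) a b) :
    False := by
  have hST : AnSet E (A ∪ D ∪ C) ⊆ AnSet E (A ∪ B ∪ C) := AnSet_mono (by grind)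
  obtain ⟨v, ⟨hav, hv⟩, hvb⟩ := TransGen.head'_iff.mp hab
  obtain ⟨hvb, hbACD⟩ : deltaReach E D (AnSet E (A ∪ D ∪ C)) (A ∪ C ∪ D) v b ∧ b ∉ A ∪ C ∪ D :=
    hvb.mono_on (fun _ _ h hp hq => ⟨h, hp, hq⟩) hv
  obtain ⟨-, ⟨⟨hav, -⟩, -, hv'⟩ | ⟨⟨hva, -⟩, hvS, haS⟩ | ⟨u, ⟨⟨hau, -⟩, -, hu⟩, ⟨hvu, -⟩, -⟩⟩ :=
    hav
  · exact false_of_common_child hDB h1 h2 h3 ha (by grind) hb hbACD hv hvb.symm hav (.inl rfl) hv'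
  · exact h2.not_deltaReach (by grind) hb (by grind) (by grind) ⟨ha, haCD⟩
      ((hvb.symm.transfer hST (by grind) (by grind)).trans
        (deltaReach_of_edge hva (by grind) (hST hvS) (hST haS) (by grind) (by grind)))
  · exact false_of_common_child hDB h1 h2 h3 ha (by grind) hb hbACD hv hvb.symm hau (.inr hvu) hu

end Decomposition

theorem deltaSep_right_decomposition_general (E : V → V → Prop) (A B C D : Set V) (hDB : D ⊆ B)
    (hBA : (B ∩ A) \ (C ∪ D) = ∅)
    (h1 : deltaSep E A B C)
    (h2 : deltaSep E B (A \ (C ∪ D)) (C ∪ D))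
    (h3 : ∀ k ∈ C \ D,
      deltaSep E A {k} (C ∪ B) ∨ deltaSep E B {k} (C ∪ D ∪ A)) :
    deltaSep E A D C := by
  have hAB : ∀ x ∈ A, x ∉ C ∪ D → x ∉ B := fun x hxA hx hxB =>
    (eq_empty_iff_forall_notMem.mp hBA) x ⟨⟨hxB, hxA⟩, hx⟩
  refine deltaSep_of_forall_not_deltaReach fun v hv hvD hvC w hw hvw => ?_
  obtain ⟨a, ⟨ha, haCD⟩, x, y, hyB, hax, hxy, -, hyCD⟩ := hvw.exists_segment
    (P := A \ (C ∪ D)) (Q := B) ⟨hv, by grind⟩ (hDB hw)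
    (disjoint_left.mpr fun x hx => hAB x hx.1 hx.2)
  by_cases hyD : y ∈ D
  · exact false_of_walk_into_D hDB h1 ha (by grind)
      (ReflTransGen.mono (fun _ _ h => ⟨h.1.1, by grind⟩) _ _ hax) hxy hyD
  · exact false_of_walk_into_B hDB h1 h2 h3 ha (hAB a ha haCD) haCD hyB
      (TransGen.tail' (ReflTransGen.mono (fun _ _ h => ⟨h.1.1, by grind⟩) _ _ hax)
        ⟨hxy, by grind⟩)

/-- Conditional right decomposition for δ-separation. -/
theorem deltaSep_right_decomposition [Fintype V] (E : V → V → Prop)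
    (hE : ∀ j k, E j k → j ≠ k) (A B C D : Set V) (hDB : D ⊆ B)
    (hBA : (B ∩ A) \ (C ∪ D) = ∅)
    (h1 : deltaSep E A B C)
    (h2 : deltaSep E B (A \ (C ∪ D)) (C ∪ D))
    (h3 : ∀ k ∈ C \ D,
      deltaSep E A {k} (C ∪ B) ∨ deltaSep E B {k} (C ∪ D ∪ A)) :
    deltaSep E A D C :=
  deltaSep_right_decomposition_general E A B C D hDB hBA h1 h2 h3
end
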